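/- arXiv:2312.07117 — 3 statements merged into one kernel-verified Lean document; each statement's English description precedes it below -/
import Mathlib

section
/- In any minimal proper labelling making a tree on n ≥ 2 vertices temporally connected, every edge carries at most two labels. -/
open Finset

abbrev TLabel (n : ℕ) := Sym2 (Fin n) → Finset ℕ

namespace Temporal

variable {n : ℕ}

/-- Journeys: from `u` one can reach `v` arriving exactly at time `t`. -/
inductive JTo (L : TLabel n) (u : Fin n) : Fin n → ℕ → Prop
  | single (v : Fin n) (t : ℕ) : t ∈ L s(u, v) → JTo L u v t
  | step (v w : Fin n) (t t' : ℕ) : JTo L u v t → t' ∈ L s(v, w) → t < t' → JTo L u w t'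

/-- Temporal reachability. -/
def Reach (L : TLabel n) (u v : Fin n) : Prop := u = v ∨ ∃ t, JTo L u v t

/-- Temporal connectivity. -/
def TC (L : TLabel n) : Prop := ∀ u v, Reach L u v

def NoLoops (L : TLabel n) : Prop := ∀ v : Fin n, L s(v, v) = ∅

/-- Proper labelling: incident distinct edges share no label. -/
def Proper (L : TLabel n) : Prop :=
  ∀ e f : Sym2 (Fin n), e ≠ f → (∃ v, v ∈ e ∧ v ∈ f) → Disjoint (L e) (L f)

/-- Remove a single label `t` from edge `e`. -/
def erase (L : TLabel n) (e : Sym2 (Fin n)) (t : ℕ) : TLabel n :=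
  fun f => if f = e then (L f).erase t else L f

/-- A label is necessary if removing it strictly reduces reachability. -/
def Necessary (L : TLabel n) (e : Sym2 (Fin n)) (t : ℕ) : Prop :=
  ∃ u v, Reach L u v ∧ ¬ Reach (erase L e t) u v

/-- A minimal labelling: all labels are necessary. -/
def Minimal (L : TLabel n) : Prop := ∀ e t, t ∈ L e → Necessary L e t

/-- Total number of labels (temporal cost). -/
def cost (L : TLabel n) : ℕ := ∑ e : Sym2 (Fin n), (L e).card

/-- The labelling only uses edges of `G`. -/
def SupportedOn (L : TLabel n) (G : SimpleGraph (Fin n)) : Prop :=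
  ∀ e, L e ≠ ∅ → e ∈ G.edgeSet

/-! ### Auxiliary machinery -/

/-- Keep only labels strictly greater than `r`. -/
def cut (L : TLabel n) (r : ℕ) : TLabel n := fun f => (L f).filter (fun x => r < x)

/-- Remove all labels on edge `e`. -/
def zero (L : TLabel n) (e : Sym2 (Fin n)) : TLabel n := fun f => if f = e then ∅ else L f

theorem JTo.mono {L M : TLabel n} {u v : Fin n} {t : ℕ} (h : ∀ f, L f ⊆ M f)
    (hj : JTo L u v t) : JTo M u v t := by
  induction hj with
  | single v t hm => exact .single v t (h _ hm)
  | step v w t t' _ hm hlt ih => exact .step v w t t' ih (h _ hm) hlt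

theorem cut_mono {L M : TLabel n} (r : ℕ) (h : ∀ f, L f ⊆ M f) :
    ∀ f, cut L r f ⊆ cut M r f := fun f => Finset.filter_subset_filter _ (h f)

theorem cut_anti {L : TLabel n} {r r' : ℕ} (h : r ≤ r') :
    ∀ f, cut L r' f ⊆ cut L r f := by
  intro f x hx
  simp only [cut, Finset.mem_filter] at *
  exact ⟨hx.1, lt_of_le_of_lt h hx.2⟩

theorem zero_le {L : TLabel n} {e : Sym2 (Fin n)} : ∀ f, zero L e f ⊆ L f := by
  intro f x hx
  simp only [zero] at hx
  split at hx
  · exact absurd hx (Finset.notMem_empty x)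
  · exact hx

theorem zero_le_erase {L : TLabel n} {e : Sym2 (Fin n)} {σ : ℕ} :
    ∀ f, zero L e f ⊆ erase L e σ f := by
  intro f x hx
  simp only [zero] at hx
  simp only [erase]
  split at hx
  · exact absurd hx (Finset.notMem_empty x)
  · next h => rw [if_neg h]; exact hx

theorem mem_erase_self {L : TLabel n} {e : Sym2 (Fin n)} {σ x : ℕ}
    (h1 : x ≠ σ) (h2 : x ∈ L e) : x ∈ erase L e σ e := by
  simp only [erase, if_pos rfl]
  exact Finset.mem_erase.mpr ⟨h1, h2⟩

theorem mem_zero {L : TLabel n} {e f : Sym2 (Fin n)} {t : ℕ} (hne : f ≠ e) (hm : t ∈ L f) :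
    t ∈ zero L e f := by simp [zero, hne, hm]

theorem JTo.append {L : TLabel n} {u v w : Fin n} {t r t' : ℕ}
    (h1 : JTo L u v t) (htr : t ≤ r) (h2 : JTo (cut L r) v w t') : JTo L u w t' := by
  induction h2 with
  | single x s hm =>
    simp only [cut, Finset.mem_filter] at hm
    exact .step v x t s h1 hm.1 (lt_of_le_of_lt htr hm.2)
  | step x y s s' _ hm hlt ih =>
    simp only [cut, Finset.mem_filter] at hm
    exact .step x y s s' ih hm.1 hlt

theorem JTo.exists_last {L : TLabel n} {u v : Fin n} {t : ℕ} (h : JTo L u v t) :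
    ∃ f, v ∈ f ∧ t ∈ L f := by
  cases h with
  | single v t hm => exact ⟨s(u, v), Sym2.mem_mk_right u v, hm⟩
  | step x v t t' _ hm _ => exact ⟨s(x, v), Sym2.mem_mk_right x v, hm⟩

/-- Reassemble a journey from `u` to `v` crossing the edge `s(a,b)` at time `τ`. -/
theorem rebuild {L M : TLabel n} {a b u v : Fin n} {τ : ℕ}
    (hM : ∀ f, zero L s(a, b) f ⊆ M f) (hτ : τ ∈ M s(a, b))
    (head : u = a ∨ ∃ s < τ, JTo (zero L s(a, b)) u a s)
    (tail : v = b ∨ ∃ t', JTo (cut (zero L s(a, b)) τ) b v t') :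
    ∃ T, JTo M u v T := by
  have cross : JTo M u b τ := by
    rcases head with rfl | ⟨s, hs, j⟩
    · exact .single b τ hτ
    · exact .step a b s τ (j.mono hM) hτ hs
  rcases tail with rfl | ⟨T, jt⟩
  · exact ⟨τ, cross⟩
  · exact ⟨T, cross.append le_rfl (jt.mono (cut_mono τ hM))⟩

theorem edge_cases {G : SimpleGraph (Fin n)} {L : TLabel n} {a b x y : Fin n} {t : ℕ}
    (hS : SupportedOn L G) (hm : t ∈ L s(x, y)) :
    (x = a ∧ y = b) ∨ (x = b ∧ y = a) ∨
      (s(x, y) ≠ s(a, b) ∧ (G.deleteEdges {s(a, b)}).Adj x y) := by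
  have hedge : s(x, y) ∈ G.edgeSet := hS _ (Finset.ne_empty_of_mem hm)
  by_cases heq : s(x, y) = s(a, b)
  · rcases Sym2.eq_iff.mp heq with h | h
    · exact Or.inl h
    · exact Or.inr (Or.inl h)
  · refine Or.inr (Or.inr ⟨heq, ?_⟩)
    rw [SimpleGraph.deleteEdges_adj]
    exact ⟨G.mem_edgeSet.mp hedge, by simpa using heq⟩

/-- Decomposition of an arbitrary journey from the `a`-side of the bridge `s(a,b)`. -/
theorem decomp {G : SimpleGraph (Fin n)} {L : TLabel n} {a b u v : Fin n} {t : ℕ}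
    (hS : SupportedOn L G)
    (hbr : ¬ (G.deleteEdges {s(a, b)}).Reachable a b)
    (hu : (G.deleteEdges {s(a, b)}).Reachable u a)
    (h : JTo L u v t) :
    ((G.deleteEdges {s(a, b)}).Reachable v a →
        u = v ∨ ∃ s ≤ t, JTo (zero L s(a, b)) u v s) ∧
    ((G.deleteEdges {s(a, b)}).Reachable v b →
        ∃ τ ∈ L s(a, b), τ ≤ t ∧
          (u = a ∨ ∃ s < τ, JTo (zero L s(a, b)) u a s) ∧
          (v = b ∨ ∃ t' ≤ t, JTo (cut (zero L s(a, b)) τ) b v t')) := by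
  induction h with
  | single v t hm =>
    rcases edge_cases (a := a) (b := b) hS hm with ⟨rfl, rfl⟩ | ⟨rfl, rfl⟩ | ⟨hne, hadj⟩
    · constructor
      · intro hva; exact absurd hva.symm hbr
      · intro _; exact ⟨t, hm, le_rfl, Or.inl rfl, Or.inl rfl⟩
    · exact absurd hu.symm hbr
    · constructor
      · intro _; exact Or.inr ⟨t, le_rfl, .single v t (mem_zero hne hm)⟩
      · intro hvb; exact absurd (hu.symm.trans (hadj.reachable.trans hvb)) hbr
  | step v w t t' hj hm hlt ih =>
    rcases edge_cases (a := a) (b := b) hS hm with ⟨rfl, rfl⟩ | ⟨rfl, rfl⟩ | ⟨hne, hadj⟩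
    · constructor
      · intro hwa; exact absurd hwa.symm hbr
      · intro _
        rcases ih.1 (SimpleGraph.Reachable.refl _) with rfl | ⟨s, hst, j⟩
        · exact ⟨t', hm, le_rfl, Or.inl rfl, Or.inl rfl⟩
        · exact ⟨t', hm, le_rfl, Or.inr ⟨s, lt_of_le_of_lt hst hlt, j⟩, Or.inl rfl⟩
    · constructor
      · intro _
        obtain ⟨τ, _, hτt, head, _⟩ := ih.2 (SimpleGraph.Reachable.refl _)
        rcases head with rfl | ⟨s, hsτ, j⟩
        · exact Or.inl rfl
        · exact Or.inr ⟨s, le_of_lt (lt_of_lt_of_le hsτ (le_of_lt (lt_of_le_of_lt hτt hlt))), j⟩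
      · intro hwb; exact absurd hwb hbr
    · constructor
      · intro hwa
        have hva := hadj.reachable.trans hwa
        rcases ih.1 hva with rfl | ⟨s, hst, j⟩
        · exact Or.inr ⟨t', le_rfl, .single w t' (mem_zero hne hm)⟩
        · exact Or.inr ⟨t', le_rfl, .step v w s t' j (mem_zero hne hm) (lt_of_le_of_lt hst hlt)⟩
      · intro hwb
        have hvb := hadj.reachable.trans hwb
        obtain ⟨τ, hτ, hτt, head, tail⟩ := ih.2 hvb
        have hτt' : τ < t' := lt_of_le_of_lt hτt hlt
        have hmem' : t' ∈ cut (zero L s(a, b)) τ s(v, w) :=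
          Finset.mem_filter.mpr ⟨mem_zero hne hm, hτt'⟩
        refine ⟨τ, hτ, le_of_lt hτt', head, Or.inr ?_⟩
        rcases tail with rfl | ⟨t'', ht'', jt⟩
        · exact ⟨t', le_rfl, .single w t' hmem'⟩
        · exact ⟨t', le_rfl, .step v w t'' t' jt hmem' (lt_of_le_of_lt ht'' hlt)⟩

/-- Two labels of the same bridge cannot both be necessary "in the same direction". -/
theorem same_dir {G : SimpleGraph (Fin n)} {L : TLabel n} {a b : Fin n}
    (hS : SupportedOn L G) (hP : Proper L)
    (hbr : ¬ (G.deleteEdges {s(a, b)}).Reachable a b)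
    {t t' : ℕ} (ht : t ∈ L s(a, b)) (ht' : t' ∈ L s(a, b)) (htt : t < t')
    {u1 v1 u2 v2 : Fin n}
    (hu1 : (G.deleteEdges {s(a, b)}).Reachable u1 a)
    (hv1 : (G.deleteEdges {s(a, b)}).Reachable v1 b)
    (hu2 : (G.deleteEdges {s(a, b)}).Reachable u2 a)
    (hv2 : (G.deleteEdges {s(a, b)}).Reachable v2 b)
    (hr1 : Reach L u1 v1) (hn1 : ¬ Reach (erase L s(a, b) t) u1 v1)
    (hr2 : Reach L u2 v2) (hn2 : ¬ Reach (erase L s(a, b) t') u2 v2)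
    (hreach : Reach L u2 v1) : False := by
  have hexcl : ∀ {x y : Fin n}, (G.deleteEdges {s(a, b)}).Reachable x a →
      (G.deleteEdges {s(a, b)}).Reachable y b → x ≠ y := by
    rintro x y hx hy rfl; exact hbr (hx.symm.trans hy)
  have tK : t ∈ erase L s(a, b) t' s(a, b) := mem_erase_self (Nat.ne_of_lt htt) ht
  have t'K : t' ∈ erase L s(a, b) t s(a, b) := mem_erase_self (Nat.ne_of_lt htt).symm ht'
  -- decompose the witness journey for t'
  obtain ⟨T2, J2⟩ := hr2.resolve_left (hexcl hu2 hv2)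
  obtain ⟨τ2, hτ2, _, head2, tail2⟩ := (decomp hS hbr hu2 J2).2 hv2
  have hτ2e : τ2 = t' := by
    by_contra hne
    have hmem : τ2 ∈ erase L s(a, b) t' s(a, b) := mem_erase_self hne hτ2
    exact hn2 (Or.inr (rebuild zero_le_erase hmem head2
      (tail2.imp id fun ⟨x, _, j⟩ => ⟨x, j⟩)))
  subst hτ2e
  -- the tail of witness 2, available below any label ≤ τ2
  have tail2c : ∀ τ ≤ τ2, v2 = b ∨ ∃ T, JTo (cut (zero L s(a, b)) τ) b v2 T :=
    fun τ hτ => tail2.imp id fun ⟨x, _, j⟩ => ⟨x, j.mono (cut_anti hτ)⟩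
  -- u2 is not a
  have hu2a : u2 ≠ a := by
    intro h
    exact hn2 (Or.inr (rebuild zero_le_erase tK (Or.inl h) (tail2c t (le_of_lt htt))))
  -- u2 cannot reach a before time t
  have hu2early : ∀ {s : ℕ}, JTo (zero L s(a, b)) u2 a s → ¬ s < t := by
    intro s j hlt
    exact hn2 (Or.inr (rebuild zero_le_erase tK (Or.inr ⟨s, hlt, j⟩) (tail2c t (le_of_lt htt))))
  -- decompose the witness journey for t
  obtain ⟨T1, J1⟩ := hr1.resolve_left (hexcl hu1 hv1)
  obtain ⟨τ1, hτ1, _, head1, tail1⟩ := (decomp hS hbr hu1 J1).2 hv1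
  have hτ1e : τ1 = t := by
    by_contra hne
    have hmem : τ1 ∈ erase L s(a, b) t s(a, b) := mem_erase_self hne hτ1
    exact hn1 (Or.inr (rebuild zero_le_erase hmem head1
      (tail1.imp id fun ⟨x, _, j⟩ => ⟨x, j⟩)))
  subst hτ1e
  have head1' : ∀ {τ : ℕ}, τ1 ≤ τ →
      (u1 = a ∨ ∃ s < τ, JTo (zero L s(a, b)) u1 a s) :=
    fun hle => head1.imp id fun ⟨s, hs, j⟩ => ⟨s, lt_of_lt_of_le hs hle, j⟩
  -- v1 is not b
  have hv1b : v1 ≠ b := by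
    intro h
    exact hn1 (Or.inr (rebuild zero_le_erase t'K (head1' (le_of_lt htt)) (Or.inl h)))
  -- decompose a journey from u2 to v1
  obtain ⟨T, J⟩ := hreach.resolve_left (hexcl hu2 hv1)
  obtain ⟨τ, hτ, _, head, tail⟩ := (decomp hS hbr hu2 J).2 hv1
  obtain ⟨s, hsτ, jh⟩ := head.resolve_left hu2a
  -- the arrival time s at a avoids all labels of the bridge
  obtain ⟨f, haf, hsf⟩ := jh.exists_last
  have hfe : f ≠ s(a, b) := by
    intro h; rw [h] at hsf; simp [zero] at hsf
  have hst : s ≠ τ1 := by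
    intro h
    exact (Finset.disjoint_left.mp
      (hP f s(a, b) hfe ⟨a, haf, Sym2.mem_mk_left a b⟩) (zero_le f hsf)) (h ▸ hτ1)
  have hts : τ1 < s := lt_of_le_of_ne (not_lt.mp (hu2early jh)) (Ne.symm hst)
  have htτ : τ1 < τ := lt_trans hts hsτ
  have hτK : τ ∈ erase L s(a, b) τ1 s(a, b) := mem_erase_self (Nat.ne_of_lt htτ).symm hτ
  obtain ⟨T', jt⟩ := (tail.resolve_left hv1b)
  exact hn1 (Or.inr (rebuild zero_le_erase hτK (head1' (le_of_lt htτ)) (Or.inr ⟨T', jt.2⟩)))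

/-- Every vertex lies on at least one side of the bridge. -/
theorem side_step {G : SimpleGraph (Fin n)} {a b x y : Fin n} (w : G.Walk x y)
    (hy : (G.deleteEdges {s(a, b)}).Reachable y a ∨ (G.deleteEdges {s(a, b)}).Reachable y b) :
    (G.deleteEdges {s(a, b)}).Reachable x a ∨ (G.deleteEdges {s(a, b)}).Reachable x b := by
  induction w with
  | nil => exact hy
  | @cons x z y h p ih =>
    by_cases heq : s(x, z) = s(a, b)
    · rcases Sym2.eq_iff.mp heq with ⟨rfl, rfl⟩ | ⟨rfl, rfl⟩
      · exact Or.inl (SimpleGraph.Reachable.refl _)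
      · exact Or.inr (SimpleGraph.Reachable.refl _)
    · have hadj : (G.deleteEdges {s(a, b)}).Adj x z := by
        rw [SimpleGraph.deleteEdges_adj]
        exact ⟨h, by simpa using heq⟩
      rcases ih hy with h1 | h1
      · exact Or.inl (hadj.reachable.trans h1)
      · exact Or.inr (hadj.reachable.trans h1)

/-- In any minimal proper labelling making a tree on `n ≥ 2` vertices temporally connected,
every edge carries at most two labels. -/
theorem stmt4 {n : ℕ} (hn : 2 ≤ n) (G : SimpleGraph (Fin n)) (hG : G.IsTree)
    (L : TLabel n) (hS : SupportedOn L G) (hP : Proper L) (hTC : TC L) (hMin : Minimal L) :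
    ∀ e : Sym2 (Fin n), (L e).card ≤ 2 := by
  intro e
  induction e using Sym2.ind with
  | _ a b =>
  by_contra hcard
  push_neg at hcard
  have hne : L s(a, b) ≠ ∅ := by
    intro h; rw [h] at hcard; simp at hcard
  have hedge : s(a, b) ∈ G.edgeSet := hS _ hne
  have hbridge : G.IsBridge s(a, b) :=
    (SimpleGraph.isAcyclic_iff_forall_edge_isBridge.mp hG.2) hedge
  have hbr : ¬ (G.deleteEdges {s(a, b)}).Reachable a b := by
    have h2 := (SimpleGraph.isBridge_iff.mp hbridge)
    simpa [SimpleGraph.deleteEdges] using h2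
  have hswap : s(b, a) = s(a, b) := Sym2.eq_swap
  -- every vertex lies on one side of the bridge
  have hside : ∀ x : Fin n, (G.deleteEdges {s(a, b)}).Reachable x a ∨
      (G.deleteEdges {s(a, b)}).Reachable x b := by
    intro x
    obtain ⟨w⟩ := hG.1.preconnected x a
    exact side_step w (Or.inl (SimpleGraph.Reachable.refl _))
  -- each label has a witness pair straddling the bridge, in one of two directions
  have wit : ∀ t ∈ L s(a, b), ∃ u v,
      ((G.deleteEdges {s(a, b)}).Reachable u a ∧ (G.deleteEdges {s(a, b)}).Reachable v b ∨
        (G.deleteEdges {s(a, b)}).Reachable u b ∧ (G.deleteEdges {s(a, b)}).Reachable v a) ∧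
      Reach L u v ∧ ¬ Reach (erase L s(a, b) t) u v := by
    intro t htL
    obtain ⟨u, v, hr, hn⟩ := hMin _ t htL
    refine ⟨u, v, ?_, hr, hn⟩
    have huv : u ≠ v := by rintro rfl; exact hn (Or.inl rfl)
    obtain ⟨T, J⟩ := hr.resolve_left huv
    rcases hside u with hua | hub
    · rcases hside v with hva | hvb
      · exfalso
        rcases (decomp hS hbr hua J).1 hva with rfl | ⟨s, _, j⟩
        · exact huv rfl
        · exact hn (Or.inr ⟨s, j.mono zero_le_erase⟩)
      · exact Or.inl ⟨hua, hvb⟩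
    · rcases hside v with hva | hvb
      · exact Or.inr ⟨hub, hva⟩
      · exfalso
        have hbr' : ¬ (G.deleteEdges {s(b, a)}).Reachable b a := by
          rw [hswap]; exact fun hh => hbr hh.symm
        have hub' : (G.deleteEdges {s(b, a)}).Reachable u b := by rw [hswap]; exact hub
        have hvb' : (G.deleteEdges {s(b, a)}).Reachable v b := by rw [hswap]; exact hvb
        rcases (decomp hS hbr' hub' J).1 hvb' with rfl | ⟨s, _, j⟩
        · exact huv rfl
        · refine hn (Or.inr ⟨s, j.mono ?_⟩)
          rw [hswap]; exact zero_le_erase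
  -- distinct labels whose witnesses have direction a → b kill each other
  have pair : ∀ {t t' : ℕ}, t ∈ L s(a, b) → t' ∈ L s(a, b) → t ≠ t' →
      ∀ {u v u' v' : Fin n},
      (G.deleteEdges {s(a, b)}).Reachable u a → (G.deleteEdges {s(a, b)}).Reachable v b →
      (G.deleteEdges {s(a, b)}).Reachable u' a → (G.deleteEdges {s(a, b)}).Reachable v' b →
      Reach L u v → ¬ Reach (erase L s(a, b) t) u v →
      Reach L u' v' → ¬ Reach (erase L s(a, b) t') u' v' → False := by
    intro t t' ht ht' hnet u v u' v' hu hv hu' hv' hr hn hr' hn'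
    rcases hnet.lt_or_gt with hlt | hlt
    · exact same_dir hS hP hbr ht ht' hlt hu hv hu' hv' hr hn hr' hn' (hTC u' v)
    · exact same_dir hS hP hbr ht' ht hlt hu' hv' hu hv hr' hn' hr hn (hTC u v')
  -- and so do distinct labels whose witnesses have direction b → a
  have pairBA : ∀ {t t' : ℕ}, t ∈ L s(a, b) → t' ∈ L s(a, b) → t ≠ t' →
      ∀ {u v u' v' : Fin n},
      (G.deleteEdges {s(a, b)}).Reachable u b → (G.deleteEdges {s(a, b)}).Reachable v a →
      (G.deleteEdges {s(a, b)}).Reachable u' b → (G.deleteEdges {s(a, b)}).Reachable v' a →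
      Reach L u v → ¬ Reach (erase L s(a, b) t) u v →
      Reach L u' v' → ¬ Reach (erase L s(a, b) t') u' v' → False := by
    intro t t' ht ht' hnet u v u' v' hu hv hu' hv' hr hn hr' hn'
    rw [← hswap] at ht ht' hu hv hu' hv' hn hn'
    have hbr' : ¬ (G.deleteEdges {s(b, a)}).Reachable b a := by
      rw [hswap]; exact fun hh => hbr hh.symm
    rcases hnet.lt_or_gt with hlt | hlt
    · exact same_dir hS hP hbr' ht ht' hlt hu hv hu' hv' hr hn hr' hn' (hTC u' v)
    · exact same_dir hS hP hbr' ht' ht hlt hu' hv' hu hv hr' hn' hr hn (hTC u v')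
  -- pigeonhole among three labels
  obtain ⟨t1, t2, t3, h1, h2, h3, h12, h13, h23⟩ := Finset.two_lt_card_iff.mp hcard
  obtain ⟨uA, vA, DA, hrA, hnA⟩ := wit t1 h1
  obtain ⟨uB, vB, DB, hrB, hnB⟩ := wit t2 h2
  obtain ⟨uC, vC, DC, hrC, hnC⟩ := wit t3 h3
  rcases DA with ⟨hA1, hA2⟩ | ⟨hA1, hA2⟩ <;> rcases DB with ⟨hB1, hB2⟩ | ⟨hB1, hB2⟩ <;>
    rcases DC with ⟨hC1, hC2⟩ | ⟨hC1, hC2⟩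
  all_goals first
    | exact pair h1 h2 h12 hA1 hA2 hB1 hB2 hrA hnA hrB hnB
    | exact pair h1 h3 h13 hA1 hA2 hC1 hC2 hrA hnA hrC hnC
    | exact pair h2 h3 h23 hB1 hB2 hC1 hC2 hrB hnB hrC hnC
    | exact pairBA h1 h2 h12 hA1 hA2 hB1 hB2 hrA hnA hrB hnB
    | exact pairBA h1 h3 h13 hA1 hA2 hC1 hC2 hrA hnA hrC hnC
    | exact pairBA h2 h3 h23 hB1 hB2 hC1 hC2 hrB hnB hrC hnC

end Temporal
end

section
/- For a path graph on n vertices, the temporal graph is temporally connected if and only if there is a journey from v₁ to v_n and a journey from v_n to v₁. -/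
open Finset

namespace Temporal

variable {n : ℕ}

lemma adj_of_mem {L : TLabel (n + 1)} (hS : SupportedOn L (SimpleGraph.pathGraph (n + 1)))
    {u v : Fin (n + 1)} {t : ℕ} (ht : t ∈ L s(u, v)) :
    u.val + 1 = v.val ∨ v.val + 1 = u.val := by
  have h := hS s(u, v) (by intro h; rw [h] at ht; exact absurd ht (Finset.notMem_empty t))
  rw [SimpleGraph.mem_edgeSet, SimpleGraph.pathGraph_adj] at h
  exact h

/-- Suffix extraction: any vertex between the endpoints of a journey has a journey
to the final endpoint ending at the same time. -/
lemma suffix_journey {L : TLabel (n + 1)} (hS : SupportedOn L (SimpleGraph.pathGraph (n + 1)))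
    {u w : Fin (n + 1)} {t : ℕ} (h : JTo L u w t) :
    ∀ x : Fin (n + 1), ((u.val ≤ x.val ∧ x.val ≤ w.val) ∨ (w.val ≤ x.val ∧ x.val ≤ u.val)) →
      x = w ∨ JTo L x w t := by
  induction h with
  | single v t ht =>
      intro x hx
      have hadj := adj_of_mem hS ht
      have : x.val = u.val ∨ x.val = v.val := by omega
      rcases this with h1 | h1
      · right
        have : x = u := Fin.ext h1
        subst this
        exact JTo.single v t ht
      · left; exact Fin.ext h1
  | step v w t t' hj ht' hlt ih =>
      intro x hx
      have hadj := adj_of_mem hS ht'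
      by_cases hxw : x.val = w.val
      · left; exact Fin.ext hxw
      · right
        have hbet : (u.val ≤ x.val ∧ x.val ≤ v.val) ∨ (v.val ≤ x.val ∧ x.val ≤ u.val) := by
          omega
        rcases ih x hbet with h1 | h1
        · subst h1
          exact JTo.single w t' ht'
        · exact JTo.step v w t t' h1 ht' hlt

/-- Prefix extraction: any vertex between the endpoints of a journey is reachable
from the starting endpoint. -/
lemma prefix_reach {L : TLabel (n + 1)} (hS : SupportedOn L (SimpleGraph.pathGraph (n + 1)))
    {u w : Fin (n + 1)} {t : ℕ} (h : JTo L u w t) :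
    ∀ x : Fin (n + 1), ((u.val ≤ x.val ∧ x.val ≤ w.val) ∨ (w.val ≤ x.val ∧ x.val ≤ u.val)) →
      Reach L u x := by
  induction h with
  | single v t ht =>
      intro x hx
      have hadj := adj_of_mem hS ht
      have : x.val = u.val ∨ x.val = v.val := by omega
      rcases this with h1 | h1
      · exact Or.inl (Fin.ext h1).symm
      · have : x = v := Fin.ext h1
        subst this
        exact Or.inr ⟨t, JTo.single x t ht⟩
  | step v w t t' hj ht' hlt ih =>
      intro x hx
      have hadj := adj_of_mem hS ht'
      by_cases hxw : x.val = w.val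
      · have : x = w := Fin.ext hxw
        subst this
        exact Or.inr ⟨t', JTo.step v x t t' hj ht' hlt⟩
      · exact ih x (by omega)

/-- A properly labelled path graph is temporally connected iff its two endpoints
reach each other. -/
theorem stmt7 {n : ℕ} (L : TLabel (n + 1))
    (hS : SupportedOn L (SimpleGraph.pathGraph (n + 1))) (hP : Proper L) :
    TC L ↔ Reach L 0 (Fin.last n) ∧ Reach L (Fin.last n) 0 := by
  constructor
  · intro h
    exact ⟨h 0 (Fin.last n), h (Fin.last n) 0⟩
  · rintro ⟨h1, h2⟩ u v
    have hu : u.val ≤ n := Nat.lt_succ_iff.mp u.isLt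
    have hv : v.val ≤ n := Nat.lt_succ_iff.mp v.isLt
    rcases le_total u.val v.val with huv | huv
    · rcases h1 with heq | ⟨T, hT⟩
      · -- 0 = last n forces n = 0
        have h0 : (0 : Fin (n + 1)).val = (Fin.last n).val := congrArg Fin.val heq
        simp [Fin.last] at h0
        exact Or.inl (Fin.ext (by omega))
      · have hx := suffix_journey hS hT u (by simp [Fin.last]; omega)
        rcases hx with h1' | h1'
        · have : u.val = n := congrArg Fin.val h1' ▸ rfl
          exact Or.inl (Fin.ext (by omega))
        · exact prefix_reach hS h1' v (by simp [Fin.last]; omega)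
    · rcases h2 with heq | ⟨T, hT⟩
      · have h0 : (Fin.last n).val = (0 : Fin (n + 1)).val := congrArg Fin.val heq
        simp [Fin.last] at h0
        exact Or.inl (Fin.ext (by omega))
      · have hx := suffix_journey hS hT u (by simp [Fin.last]; omega)
        rcases hx with h1' | h1'
        · have : u.val = 0 := congrArg Fin.val h1' ▸ rfl
          exact Or.inl (Fin.ext (by omega))
        · exact prefix_reach hS h1' v (by simp [Fin.last]; omega)

end Temporal
end

section
/- The parity labelling of the even cycle C_n uses exactly n²/4 labels in total; hence there exists a minimal temporally connected proper temporal graph on n vertices (n even) with total temporal cost at least n²/4. -/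
open Finset

namespace Temporal

variable {n : ℕ}

/-- The parity labelling of the even cycle `C n`: each edge `{v_i, v_{i+1}}` with `i` even
receives all odd labels in `{1, …, n/2}`, and each edge with `i` odd receives all even
labels in `{1, …, n/2}`. -/
def parityLabel (n : ℕ) [NeZero n] : TLabel n := fun e =>
  if ∃ i : Fin n, e = s(i, i + 1) ∧ (i : ℕ) % 2 = 0 then
    (Finset.range (n / 2 + 1)).filter (fun t => t % 2 = 1)
  else if ∃ i : Fin n, e = s(i, i + 1) ∧ (i : ℕ) % 2 = 1 then
    (Finset.range (n / 2 + 1)).filter (fun t => t % 2 = 0 ∧ t ≠ 0)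
  else ∅

/-! ### Auxiliary lemmas -/

section Aux
set_option linter.unusedSectionVars false

variable [NeZero n]
open Fin.CommRing Fin.NatCast

lemma npos : 0 < n := Nat.pos_of_ne_zero (NeZero.ne n)

lemma val_one_of (h : 2 ≤ n) : ((1 : Fin n) : ℕ) = 1 := by
  rw [← Nat.cast_one, Fin.val_natCast]; exact Nat.mod_eq_of_lt h

lemma val_add_two (h2 : 2 ∣ n) (a b : Fin n) : ((a + b : Fin n) : ℕ) % 2 = (a.val + b.val) % 2 := by
  rw [Fin.val_add, Nat.mod_mod_of_dvd _ h2]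

lemma val_sub_two (h2 : 2 ∣ n) (a b : Fin n) : ((a - b : Fin n) : ℕ) % 2 = (a.val + b.val) % 2 := by
  have hb : b.val ≤ n := le_of_lt b.isLt
  have : (a - b).val = (n - b.val + a.val) % n := by rw [Fin.sub_def]
  rw [this, Nat.mod_mod_of_dvd _ h2]
  omega

lemma val_cast_two (h2 : 2 ∣ n) (k : ℕ) : (((k : Fin n)) : ℕ) % 2 = k % 2 := by
  rw [Fin.val_natCast, Nat.mod_mod_of_dvd _ h2]

/-- cyclic distance -/
def cd (u v : Fin n) : ℕ := min ((v - u : Fin n) : ℕ) ((u - v : Fin n) : ℕ)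

lemma cd_adj {v w : Fin n} (h : w = v + 1 ∨ v = w + 1) : cd v w ≤ 1 := by
  have hone : ((1 : Fin n) : ℕ) ≤ 1 := by
    rw [← Nat.cast_one, Fin.val_natCast]; exact Nat.mod_le _ _
  rcases h with h | h
  · have : w - v = 1 := by rw [h]; ring
    calc cd v w ≤ ((w - v : Fin n) : ℕ) := min_le_left _ _
    _ ≤ 1 := by rw [this]; exact hone
  · have : v - w = 1 := by rw [h]; ring
    calc cd v w ≤ ((v - w : Fin n) : ℕ) := min_le_right _ _
    _ ≤ 1 := by rw [this]; exact hone

lemma sub_one_le {x : Fin n} (hx : x ≠ 0) : ((x - 1 : Fin n) : ℕ) ≤ x.val := by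
  have hxv : 1 ≤ x.val := Nat.pos_of_ne_zero (fun h => hx (Fin.ext h))
  have hn2 : 2 ≤ n := by
    by_contra hc
    interval_cases n
    · exact absurd rfl (NeZero.ne 0)
    · exact hx (Subsingleton.elim x 0)
  have h1 : ((1 : Fin n) : ℕ) = 1 := val_one_of hn2
  have : ((x - 1 : Fin n) : ℕ) = (n - ((1 : Fin n) : ℕ) + x.val) % n := by rw [Fin.sub_def]
  rw [this, h1, show n - 1 + x.val = (x.val - 1) + n by omega, Nat.add_mod_right,
    Nat.mod_eq_of_lt (by have := x.isLt; omega)]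
  omega

lemma add_one_le (x : Fin n) : ((x + 1 : Fin n) : ℕ) ≤ x.val + 1 := by
  have hone : ((1 : Fin n) : ℕ) ≤ 1 := by
    rw [← Nat.cast_one, Fin.val_natCast]; exact Nat.mod_le _ _
  rw [Fin.val_add]
  calc (x.val + ((1:Fin n):ℕ)) % n ≤ x.val + ((1:Fin n):ℕ) := Nat.mod_le _ _
  _ ≤ x.val + 1 := by omega

lemma cd_step {u v w : Fin n} (h : w = v + 1 ∨ v = w + 1) : cd u w ≤ cd u v + 1 := by
  by_cases huv : u = v
  · subst huv
    have := cd_adj h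
    have h0 : cd u u = 0 := by unfold cd; simp
    omega
  · have hvu : v - u ≠ 0 := sub_ne_zero.mpr (fun hc => huv hc.symm)
    have huv' : u - v ≠ 0 := sub_ne_zero.mpr huv
    rcases h with hw | hw
    · have A1 : ((w - u : Fin n) : ℕ) ≤ (v - u : Fin n).val + 1 := by
        have e : w - u = (v - u) + 1 := by rw [hw]; ring
        rw [e]; exact add_one_le _
      have A2 : ((u - w : Fin n) : ℕ) ≤ (u - v : Fin n).val := by
        have e : u - w = (u - v) - 1 := by rw [hw]; ring
        rw [e]; exact sub_one_le huv'
      unfold cd; omega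
    · have A1 : ((u - w : Fin n) : ℕ) ≤ (u - v : Fin n).val + 1 := by
        have e : u - w = (u - v) + 1 := by rw [hw]; ring
        rw [e]; exact add_one_le _
      have A2 : ((w - u : Fin n) : ℕ) ≤ (v - u : Fin n).val := by
        have e : w - u = (v - u) - 1 := by rw [hw]; ring
        rw [e]; exact sub_one_le hvu
      unfold cd; omega

lemma cd_pos {u v : Fin n} (h : u ≠ v) : 1 ≤ cd u v := by
  have h1 : v - u ≠ 0 := sub_ne_zero.mpr (Ne.symm h)
  have h2 : u - v ≠ 0 := sub_ne_zero.mpr h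
  have h1' : (v - u : Fin n).val ≠ 0 := fun hc => h1 (Fin.ext hc)
  have h2' : (u - v : Fin n).val ≠ 0 := fun hc => h2 (Fin.ext hc)
  unfold cd; omega

lemma cd_add_cast (s : Fin n) {k : ℕ} (hk : k ≤ n / 2) : cd s (s + (k : Fin n)) = k := by
  have hn : 0 < n := npos
  have hkn : k < n := lt_of_le_of_lt hk (Nat.div_lt_self hn (by norm_num))
  have e1 : s + (k : Fin n) - s = (k : Fin n) := by ring
  have e2 : s - (s + (k : Fin n)) = -(k : Fin n) := by ring
  have v1 : ((k : Fin n) : ℕ) = k := by rw [Fin.val_natCast]; exact Nat.mod_eq_of_lt hkn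
  have v2 : ((-(k : Fin n) : Fin n) : ℕ) = (n - k) % n := by
    rw [Fin.neg_def]
    show (n - ((k : Fin n)).val) % n = (n - k) % n
    rw [v1]
  unfold cd
  rw [e1, e2, v1, v2]
  rcases Nat.eq_zero_or_pos k with rfl | hk1
  · simp
  · have : (n - k) % n = n - k := Nat.mod_eq_of_lt (by omega)
    rw [this]
    omega

/-! edge and label lemmas -/

lemma mem_label_bounds {e : Sym2 (Fin n)} {t : ℕ} (h : t ∈ parityLabel n e) :
    1 ≤ t ∧ t ≤ n / 2 := by
  unfold parityLabel at h
  split_ifs at h with h1 h2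
  · simp only [Finset.mem_filter, Finset.mem_range] at h; omega
  · simp only [Finset.mem_filter, Finset.mem_range] at h; omega
  · exact absurd h (by simp)

lemma mem_label_cases {e : Sym2 (Fin n)} {t : ℕ} (h : t ∈ parityLabel n e) :
    ∃ i : Fin n, e = s(i, i + 1) ∧ ((i : ℕ) + t) % 2 = 1 := by
  unfold parityLabel at h
  split_ifs at h with h1 h2
  · obtain ⟨i, hi, hpar⟩ := h1
    simp only [Finset.mem_filter, Finset.mem_range] at h
    exact ⟨i, hi, by omega⟩
  · obtain ⟨i, hi, hpar⟩ := h2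
    simp only [Finset.mem_filter, Finset.mem_range] at h
    exact ⟨i, hi, by omega⟩
  · exact absurd h (by simp)

lemma mem_label_adj {v w : Fin n} {t : ℕ} (h : t ∈ parityLabel n s(v, w)) :
    w = v + 1 ∨ v = w + 1 := by
  obtain ⟨i, hi, -⟩ := mem_label_cases h
  rcases Sym2.eq_iff.mp hi with ⟨rfl, rfl⟩ | ⟨rfl, rfl⟩
  · exact Or.inl rfl
  · exact Or.inr rfl

lemma E_inj (h3 : 3 ≤ n) {i j : Fin n} (h : s(i, i + 1) = s(j, j + 1)) : i = j := by
  rcases Sym2.eq_iff.mp h with ⟨h1, -⟩ | ⟨h1, h2⟩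
  · exact h1
  · exfalso
    have hj : j = i + 1 := h2.symm
    rw [hj] at h1
    rw [add_assoc] at h1
    have h0 : (1 : Fin n) + 1 = 0 := (left_eq_add.mp h1).symm ▸ rfl
    have hv : ((1 : Fin n) + 1 : Fin n).val = 0 := by
      rw [left_eq_add.mp h1]; rfl
    rw [Fin.val_add, val_one_of (by omega), Nat.mod_eq_of_lt (by omega)] at hv
    omega

lemma label_even {i : Fin n} (hi : (i : ℕ) % 2 = 0) :
    parityLabel n s(i, i + 1) = (Finset.range (n / 2 + 1)).filter (fun t => t % 2 = 1) := by
  unfold parityLabel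
  rw [if_pos ⟨i, rfl, hi⟩]

lemma label_odd (h3 : 3 ≤ n) {i : Fin n} (hi : (i : ℕ) % 2 = 1) :
    parityLabel n s(i, i + 1) =
      (Finset.range (n / 2 + 1)).filter (fun t => t % 2 = 0 ∧ t ≠ 0) := by
  unfold parityLabel
  rw [if_neg, if_pos ⟨i, rfl, hi⟩]
  rintro ⟨j, hj, hj2⟩
  have := E_inj h3 hj
  rw [this] at hi
  omega

lemma label_empty {e : Sym2 (Fin n)} (he : ∀ i : Fin n, e ≠ s(i, i + 1)) :
    parityLabel n e = ∅ := by
  unfold parityLabel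
  rw [if_neg, if_neg]
  · rintro ⟨i, hi, -⟩; exact he i hi
  · rintro ⟨i, hi, -⟩; exact he i hi

lemma erase_subset' {L : TLabel n} {e f : Sym2 (Fin n)} {t0 t : ℕ}
    (h : t ∈ erase L e t0 f) : t ∈ L f := by
  unfold erase at h
  split_ifs at h
  · exact (Finset.mem_erase.mp h).2
  · exact h

lemma jto_bounds {L' : TLabel n} (hL : ∀ (f : Sym2 (Fin n)) (t : ℕ), t ∈ L' f → 1 ≤ t ∧ t ≤ n / 2)
    {u v : Fin n} {t : ℕ} (h : JTo L' u v t) : 1 ≤ t ∧ t ≤ n / 2 := by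
  induction h with
  | single v t hm => exact hL _ _ hm
  | step v w t t' hj hm hlt ih => exact hL _ _ hm


lemma mem_label_even {i : Fin n} (hi : (i : ℕ) % 2 = 0) {t : ℕ}
    (h1 : t % 2 = 1) (h2 : t ≤ n / 2) : t ∈ parityLabel n s(i, i + 1) := by
  rw [label_even hi]
  simp only [Finset.mem_filter, Finset.mem_range]
  omega

lemma mem_label_odd (h2 : 2 ∣ n) {i : Fin n} (hi : (i : ℕ) % 2 = 1) {t : ℕ}
    (h1 : t % 2 = 0) (h1' : t ≠ 0) (hle : t ≤ n / 2) : t ∈ parityLabel n s(i, i + 1) := by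
  have h3 : 3 ≤ n := by
    have : 2 ≤ t := by omega
    have : 2 ≤ n / 2 := le_trans this hle
    omega
  rw [label_odd h3 hi]
  simp only [Finset.mem_filter, Finset.mem_range]
  omega

/-- labels on edge `s(i, i+1)` are exactly those in `[1, n/2]` with parity opposite to `i` -/
lemma mem_label_of_parity (h2 : 2 ∣ n) {i : Fin n} {t : ℕ}
    (hp : ((i : ℕ) + t) % 2 = 1) (h1 : 1 ≤ t) (hle : t ≤ n / 2) :
    t ∈ parityLabel n s(i, i + 1) := by
  rcases Nat.even_or_odd (i : ℕ) with he | ho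
  · exact mem_label_even (Nat.even_iff.mp he) (by have := Nat.even_iff.mp he; omega) hle
  · exact mem_label_odd h2 (Nat.odd_iff.mp ho) (by have := Nat.odd_iff.mp ho; omega)
      (by have := Nat.odd_iff.mp ho; omega) hle

lemma jto_cw_gen (h2 : 2 ∣ n) (s : Fin n) (a : ℕ) (ha : 1 ≤ a)
    (hpar : ((s : ℕ) + a) % 2 = 1) :
    ∀ k, 1 ≤ k → a + k - 1 ≤ n / 2 →
      JTo (parityLabel n) s (s + (k : Fin n)) (a + k - 1) := by
  intro k
  induction k with
  | zero => omega
  | succ k ih =>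
    intro _ hk2
    rcases Nat.eq_zero_or_pos k with rfl | hk1
    · -- base step : single edge with label a
      have hmem : a ∈ parityLabel n s(s, s + 1) :=
        mem_label_of_parity h2 hpar ha (by omega)
      have : JTo (parityLabel n) s (s + 1) a := JTo.single _ _ hmem
      have e1 : ((0 + 1 : ℕ) : Fin n) = (1 : Fin n) := by push_cast; ring
      rw [e1]
      rw [show a + (0 + 1) - 1 = a by omega]
      exact this
    · have hstep : a + k ∈ parityLabel n s(s + (k : Fin n), (s + (k : Fin n)) + 1) := by
        apply mem_label_of_parity h2
        · have hv : ((s + (k : Fin n) : Fin n) : ℕ) % 2 = ((s : ℕ) + k) % 2 := by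
            rw [val_add_two h2]
            have := val_cast_two (n := n) h2 k
            omega
          omega
        · omega
        · omega
      have e1 : (s + (k : Fin n)) + 1 = s + ((k + 1 : ℕ) : Fin n) := by push_cast; ring
      rw [e1] at hstep
      have hj : JTo (parityLabel n) s (s + ((k+1 : ℕ) : Fin n)) (a + k) :=
        JTo.step _ _ (a + k - 1) (a + k) (ih hk1 (by omega)) hstep (by omega)
      rw [show a + (k + 1) - 1 = a + k by omega]
      exact hj

lemma jto_ccw_gen (h2 : 2 ∣ n) (s : Fin n) (a : ℕ) (ha : 1 ≤ a)
    (hpar : ((s : ℕ) + a) % 2 = 0) :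
    ∀ k, 1 ≤ k → a + k - 1 ≤ n / 2 →
      JTo (parityLabel n) s (s - (k : Fin n)) (a + k - 1) := by
  intro k
  induction k with
  | zero => omega
  | succ k ih =>
    intro _ hk2
    have hedge : ∀ j : ℕ, ((s - ((j+1 : ℕ) : Fin n) : Fin n) : ℕ) % 2 = ((s:ℕ) + j + 1) % 2 := by
      intro j
      rw [val_sub_two h2]
      have := val_cast_two (n := n) h2 (j + 1)
      omega
    have hsym : ∀ j : ℕ, s(s - ((j : ℕ) : Fin n), s - ((j+1 : ℕ) : Fin n))
        = s(s - ((j+1:ℕ) : Fin n), (s - ((j+1:ℕ) : Fin n)) + 1) := by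
      intro j
      have e : (s - ((j+1:ℕ) : Fin n)) + 1 = s - ((j : ℕ) : Fin n) := by push_cast; ring
      rw [e]
      exact Sym2.eq_swap
    rcases Nat.eq_zero_or_pos k with rfl | hk1
    · have hmem : a ∈ parityLabel n s(s - ((1:ℕ) : Fin n), (s - ((1:ℕ) : Fin n)) + 1) := by
        apply mem_label_of_parity h2
        · have h00 := hedge 0
          rw [show ((0+1 : ℕ) : Fin n) = ((1:ℕ) : Fin n) by norm_num] at h00
          omega
        · exact ha
        · omega
      rw [← hsym 0] at hmem
      have e0 : ((0:ℕ) : Fin n) = 0 := by push_cast; ring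
      rw [e0, sub_zero] at hmem
      have : JTo (parityLabel n) s (s - ((1:ℕ) : Fin n)) a := JTo.single _ _ hmem
      rw [show a + (0 + 1) - 1 = a by omega, show ((0+1 : ℕ) : Fin n) = ((1:ℕ) : Fin n) by norm_num]
      exact this
    · have hmem : a + k ∈ parityLabel n
          s(s - ((k+1:ℕ) : Fin n), (s - ((k+1:ℕ) : Fin n)) + 1) := by
        apply mem_label_of_parity h2
        · have := hedge k
          omega
        · omega
        · omega
      rw [← hsym k] at hmem
      have hj : JTo (parityLabel n) s (s - ((k+1 : ℕ) : Fin n)) (a + k) :=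
        JTo.step _ _ (a + k - 1) (a + k) (ih hk1 (by omega)) hmem (by omega)
      rw [show a + (k + 1) - 1 = a + k by omega]
      exact hj

lemma parity_tc (h2 : 2 ∣ n) : TC (parityLabel n) := by
  intro u v
  by_cases huv : u = v
  · exact Or.inl huv
  right
  have hn2 : 2 ≤ n := by
    rcases h2 with ⟨c, rfl⟩
    have := npos (n := 2 * c)
    omega
  set k := ((v - u : Fin n) : ℕ) with hkdef
  have hk1 : 1 ≤ k := by
    have : v - u ≠ 0 := sub_ne_zero.mpr (fun hc => huv hc.symm)
    have : (v - u : Fin n).val ≠ 0 := fun hc => this (Fin.ext hc)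
    omega
  have hkn : k < n := (v - u).isLt
  have hv : v = u + (k : Fin n) := by
    have : ((k : ℕ) : Fin n) = v - u := by
      rw [hkdef, Fin.cast_val_eq_self]
    rw [this]; ring
  have hvj : ∀ j : ℕ, j + k = n → v = u - (j : Fin n) := by
    intro j hj
    have hc : ((k : ℕ) : Fin n) = -((j : ℕ) : Fin n) := by
      have : ((k : ℕ) : Fin n) + ((j : ℕ) : Fin n) = ((n : ℕ) : Fin n) := by
        push_cast
        rw [show ((k : ℕ) : Fin n) + ((j : ℕ) : Fin n) = (((k + j : ℕ)) : Fin n) by push_cast; ring]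
        rw [show k + j = n by omega]
      rw [show ((n : ℕ) : Fin n) = 0 by rw [Fin.natCast_self]] at this
      linear_combination this
    rw [hv, hc]; ring
  rcases Nat.even_or_odd (u : ℕ) with hu | hu
  · have hu0 : (u : ℕ) % 2 = 0 := Nat.even_iff.mp hu
    by_cases hk : k ≤ n / 2
    · refine ⟨k, ?_⟩
      have := jto_cw_gen h2 u 1 le_rfl (by omega) k hk1 (by omega)
      rw [show 1 + k - 1 = k by omega] at this
      rw [hv]; exact this
    · set j := n - k with hjdef
      have hj1 : 1 ≤ j := by omega
      have hjm : j + 1 ≤ n / 2 := by omega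
      refine ⟨j + 1, ?_⟩
      have := jto_ccw_gen h2 u 2 (by omega) (by omega) j hj1 (by omega)
      rw [show 2 + j - 1 = j + 1 by omega] at this
      rw [hvj j (by omega)]; exact this
  · have hu1 : (u : ℕ) % 2 = 1 := Nat.odd_iff.mp hu
    by_cases hk : k + 1 ≤ n / 2
    · refine ⟨k + 1, ?_⟩
      have := jto_cw_gen h2 u 2 (by omega) (by omega) k hk1 (by omega)
      rw [show 2 + k - 1 = k + 1 by omega] at this
      rw [hv]; exact this
    · set j := n - k with hjdef
      have hj1 : 1 ≤ j := by omega
      have hjm : j ≤ n / 2 := by omega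
      refine ⟨j, ?_⟩
      have := jto_ccw_gen h2 u 1 le_rfl (by omega) j hj1 (by omega)
      rw [show 1 + j - 1 = j by omega] at this
      rw [hvj j (by omega)]; exact this

lemma parity_proper (h2 : 2 ∣ n) : Proper (parityLabel n) := by
  intro e f hef hinc
  obtain ⟨x, hxe, hxf⟩ := hinc
  rw [Finset.disjoint_left]
  intro t hte htf
  obtain ⟨i, rfl, hpi⟩ := mem_label_cases hte
  obtain ⟨j, rfl, hpj⟩ := mem_label_cases htf
  have hn2 : 2 ≤ n := by
    rcases h2 with ⟨c, rfl⟩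
    have := npos (n := 2 * c)
    omega
  have hone : ((1 : Fin n) : ℕ) = 1 := val_one_of hn2
  have hij : i ≠ j := fun hc => hef (by rw [hc])
  rcases Sym2.mem_iff.mp hxe with h1 | h1 <;> rcases Sym2.mem_iff.mp hxf with hh2 | hh2
  · exact hij (h1.symm.trans hh2)
  · have hij1 : i = j + 1 := h1.symm.trans hh2
    have : (i : ℕ) % 2 = ((j : ℕ) + 1) % 2 := by rw [hij1, val_add_two h2, hone]
    omega
  · have hji1 : j = i + 1 := hh2.symm.trans h1
    have : (j : ℕ) % 2 = ((i : ℕ) + 1) % 2 := by rw [hji1, val_add_two h2, hone]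
    omega
  · exact hij (add_right_cancel (h1.symm.trans hh2))


lemma erase_label_bounds {e : Sym2 (Fin n)} {t0 : ℕ} :
    ∀ (f : Sym2 (Fin n)) (t : ℕ), t ∈ erase (parityLabel n) e t0 f → 1 ≤ t ∧ t ≤ n / 2 :=
  fun _ _ h => mem_label_bounds (erase_subset' h)


lemma self_ne_add_one (hn2 : 2 ≤ n) (x : Fin n) : x ≠ x + 1 := by
  intro hc
  have hcval := congrArg Fin.val hc
  rw [Fin.val_add, val_one_of hn2] at hcval
  rcases Nat.lt_or_ge (x.val + 1) n with hlt | hge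
  · rw [Nat.mod_eq_of_lt hlt] at hcval; omega
  · have := x.isLt
    rw [show x.val + 1 = n by omega, Nat.mod_self] at hcval
    omega

lemma tight_invariant (h2 : 2 ∣ n) (i : Fin n) (t0 : ℕ)
    (ht0 : t0 ∈ parityLabel n s(i, i + 1)) (s : Fin n)
    (hs : s + (t0 : Fin n) = i + 1) (hse : (s : ℕ) % 2 = 0) :
    ∀ v t, JTo (erase (parityLabel n) s(i, i + 1) t0) s v t →
      cd s v < t ∨ (cd s v = t ∧ v = s + (t : Fin n) ∧ t < t0) := by
  have hn2 : 2 ≤ n := by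
    rcases h2 with ⟨c, rfl⟩; have := npos (n := 2 * c); omega
  have hone : ((1 : Fin n) : ℕ) = 1 := val_one_of hn2
  have ht0b := mem_label_bounds ht0
  intro v t h
  induction h with
  | single v t hm =>
    have hmem := erase_subset' hm
    have hb := mem_label_bounds hmem
    have hadj := mem_label_adj hmem
    have hvs : v ≠ s := by
      rintro rfl
      rcases hadj with hc | hc
      · exact self_ne_add_one hn2 v hc
      · exact self_ne_add_one hn2 v hc
    have hcd1 : cd s v ≤ 1 := cd_adj hadj
    have hcdp : 1 ≤ cd s v := cd_pos (fun hc => hvs hc.symm)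
    by_cases hc : cd s v < t
    · exact Or.inl hc
    · have ht1 : t = 1 := by omega
      subst ht1
      right
      by_cases hv : v = s + 1
      · refine ⟨by omega, by rw [hv]; norm_num, ?_⟩
        rcases Nat.lt_or_ge 1 t0 with h | h
        · exact h
        · exfalso
          have ht01 : t0 = 1 := by omega
          subst ht01
          have hsi : s = i := by
            have : s + (1 : Fin n) = i + 1 := by
              rw [← hs]; norm_num
            exact add_right_cancel this
          have : s(s, v) = s(i, i + 1) := by rw [hsi, hv, hsi]
          rw [this] at hm
          unfold erase at hm
          rw [if_pos rfl] at hm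
          exact absurd (Finset.mem_erase.mp hm).1 (by simp)
      · -- v = s - 1 with s - 1 ≠ s + 1
        have hsv : s = v + 1 := by
          rcases hadj with h | h
          · exact absurd h hv
          · exact h
        exfalso
        have hedge : s(s, v) = s(v, v + 1) := by rw [← hsv]; exact Sym2.eq_swap
        rw [hedge] at hmem
        have hn3 : 3 ≤ n := by
          rcases Nat.lt_or_ge n 3 with hlt | hge
          · exfalso
            have hn' : n = 2 := by omega
            have h20 : (1 : Fin n) + 1 = 0 := by
              apply Fin.ext
              rw [Fin.val_add, val_one_of hn2, Fin.val_zero, hn']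
            apply hv
            rw [hsv]
            linear_combination -h20
          · exact hge
        have hvodd : (v : ℕ) % 2 = 1 := by
          have hv2 := val_sub_two h2 s 1
          have : v = s - 1 := by rw [hsv]; ring
          rw [← this] at hv2
          rw [hone] at hv2
          omega
        rw [label_odd hn3 hvodd] at hmem
        simp only [Finset.mem_filter, Finset.mem_range] at hmem
        omega
  | step v w t t' hj hm hlt ih =>
    have hmem := erase_subset' hm
    have hb' := mem_label_bounds hmem
    have hbt := jto_bounds erase_label_bounds hj
    have hadj := mem_label_adj hmem
    have hstep : cd s w ≤ cd s v + 1 := cd_step hadj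
    rcases ih with hlt' | ⟨hcd, hv, hto⟩
    · left; omega
    · by_cases hc : cd s w < t'
      · exact Or.inl hc
      · have ht' : t' = t + 1 := by omega
        have hcw : cd s w = t + 1 := by omega
        rcases hadj with hw | hw
        · -- w = v + 1 = s + (t+1)
          have hw' : w = s + ((t + 1 : ℕ) : Fin n) := by
            rw [hw, hv]; push_cast; ring
          right
          refine ⟨by omega, by rw [ht']; exact hw', ?_⟩
          rcases Nat.lt_or_ge t' t0 with h | h
          · omega
          · exfalso
            have ht0' : t' = t0 := by omega
            have hvi : v = i := by
              rw [hv]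
              have : s + ((t : ℕ) : Fin n) + 1 = i + 1 := by
                rw [← hs, ← ht0', ht']
                push_cast
                ring
              exact add_right_cancel this
            have hedge : s(v, w) = s(i, i + 1) := by rw [hvi, hw, hvi]
            rw [hedge] at hm
            unfold erase at hm
            rw [if_pos rfl] at hm
            exact absurd ht0' (Finset.mem_erase.mp hm).1
        · -- v = w + 1, so w = s + (t-1), contradiction with cd s w = t + 1
          exfalso
          have hw' : w = s + ((t - 1 : ℕ) : Fin n) := by
            have : w = v - 1 := by rw [hw]; ring
            rw [this, hv]
            have : ((t - 1 : ℕ) : Fin n) = ((t : ℕ) : Fin n) - 1 := by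
              push_cast [hbt.1]
              ring
            rw [this]
            ring
          have : cd s w = t - 1 := by
            rw [hw']
            exact cd_add_cast s (by omega)
          omega

lemma parity_necessary (h2 : 2 ∣ n) {e : Sym2 (Fin n)} {t0 : ℕ}
    (hm : t0 ∈ parityLabel n e) : Necessary (parityLabel n) e t0 := by
  have hn2 : 2 ≤ n := by
    rcases h2 with ⟨c, rfl⟩; have := npos (n := 2 * c); omega
  have hb := mem_label_bounds hm
  obtain ⟨i, rfl, hpi⟩ := mem_label_cases hm
  set s : Fin n := i + 1 - ((t0 : ℕ) : Fin n) with hsdef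
  have hs : s + ((t0 : ℕ) : Fin n) = i + 1 := by rw [hsdef]; ring
  have hone : ((1 : Fin n) : ℕ) = 1 := val_one_of hn2
  have hse : (s : ℕ) % 2 = 0 := by
    have h1 := val_sub_two h2 (i + 1) ((t0 : ℕ) : Fin n)
    have h2' := val_add_two h2 i 1
    have h3 := val_cast_two (n := n) h2 t0
    rw [hone] at h2'
    rw [← hsdef] at h1
    omega
  have hm1 : 1 ≤ n / 2 := by omega
  have hj := jto_cw_gen h2 s 1 le_rfl (by omega) (n / 2) hm1 (by omega)
  rw [show 1 + n / 2 - 1 = n / 2 by omega] at hj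
  refine ⟨s, s + ((n / 2 : ℕ) : Fin n), Or.inr ⟨n / 2, hj⟩, ?_⟩
  rintro (heq | ⟨t, hjj⟩)
  · have h0 : ((n / 2 : ℕ) : Fin n) = 0 := (left_eq_add.mp heq)
    have hval := congrArg Fin.val h0
    rw [Fin.val_natCast, Fin.val_zero] at hval
    rw [Nat.mod_eq_of_lt (Nat.div_lt_self npos (by norm_num))] at hval
    omega
  · have hbt := jto_bounds erase_label_bounds hjj
    have hcd : cd s (s + ((n / 2 : ℕ) : Fin n)) = n / 2 := cd_add_cast s le_rfl
    rcases tight_invariant h2 i t0 hm s hs hse _ t hjj with hlt | ⟨hceq, -, hto⟩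
    · omega
    · omega


lemma sum_alt (a b : ℕ) : ∀ m : ℕ,
    ∑ k ∈ Finset.range (2 * m), (if k % 2 = 0 then a else b) = m * (a + b) := by
  intro m
  induction m with
  | zero => simp
  | succ m ih =>
    rw [show 2 * (m + 1) = (2 * m) + 1 + 1 by ring, Finset.sum_range_succ,
      Finset.sum_range_succ, ih, if_pos (by omega : (2 * m) % 2 = 0),
      if_neg (by omega : ¬(2 * m + 1) % 2 = 0)]
    ring

lemma card_split : ∀ m : ℕ,
    ((Finset.range (m + 1)).filter (fun t => t % 2 = 1)).card +
      ((Finset.range (m + 1)).filter (fun t => t % 2 = 0 ∧ t ≠ 0)).card = m := by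
  intro m
  induction m with
  | zero => decide
  | succ m ih =>
    rw [Finset.range_add_one, Finset.filter_insert, Finset.filter_insert]
    by_cases h : (m + 1) % 2 = 1
    · rw [if_pos h, if_neg (by omega), Finset.card_insert_of_notMem (by simp)]
      omega
    · rw [if_neg h, if_pos ⟨by omega, by omega⟩, Finset.card_insert_of_notMem (by simp)]
      omega

lemma cost_eq (h2 : 2 ∣ n) (h3 : 3 ≤ n) : cost (parityLabel n) = n / 2 * (n / 2) := by
  classical
  have hzero : ∀ e ∈ (Finset.univ : Finset (Sym2 (Fin n))),
      e ∉ Finset.image (fun i : Fin n => s(i, i + 1)) Finset.univ →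
      (parityLabel n e).card = 0 := by
    intro e _ he
    rw [label_empty, Finset.card_empty]
    intro i hi
    exact he (Finset.mem_image.mpr ⟨i, Finset.mem_univ _, hi.symm⟩)
  rw [cost, ← Finset.sum_subset (Finset.subset_univ _) hzero,
    Finset.sum_image (fun i _ j _ h => E_inj h3 h)]
  have hsum : ∑ i : Fin n, (parityLabel n s(i, i + 1)).card
      = ∑ k ∈ Finset.range n, (if k % 2 = 0
          then ((Finset.range (n / 2 + 1)).filter (fun t => t % 2 = 1)).card
          else ((Finset.range (n / 2 + 1)).filter (fun t => t % 2 = 0 ∧ t ≠ 0)).card) := by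
    rw [← Fin.sum_univ_eq_sum_range]
    apply Finset.sum_congr rfl
    intro i _
    by_cases hp : (i : ℕ) % 2 = 0
    · rw [if_pos hp, label_even hp]
    · rw [if_neg hp, label_odd h3 (by omega)]
  rw [hsum]
  obtain ⟨m, rfl⟩ := h2
  have hm : 2 * m / 2 = m := by omega
  rw [hm, sum_alt, card_split]

lemma cost_two : cost (parityLabel 2) = 1 := by decide

theorem stmt11' (hn : 0 < n) (h2 : 2 ∣ n) :
    cost (parityLabel n) = n ^ 2 / 4 ∧
    ∃ L : TLabel n, Proper L ∧ TC L ∧ Minimal L ∧ n ^ 2 / 4 ≤ cost L := by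
  obtain ⟨m, rfl⟩ := h2
  have h2 : 2 ∣ 2 * m := ⟨m, rfl⟩
  have hm1 : 1 ≤ m := by omega
  have hmdiv : 2 * m / 2 = m := by omega
  have hsq : (2 * m) ^ 2 / 4 = m * m := by
    rw [show (2 * m) ^ 2 = m * m * 4 by ring]
    exact Nat.mul_div_cancel _ (by norm_num)
  have hcost : cost (parityLabel (2 * m)) = m * m := by
    rcases Nat.lt_or_ge m 2 with hlt | hge
    · have hm2 : m = 1 := by omega
      subst hm2
      exact cost_two
    · have := cost_eq (n := 2 * m) h2 (by omega)
      rw [hmdiv] at this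
      exact this
  refine ⟨by rw [hcost, hsq], parityLabel (2 * m), parity_proper h2, parity_tc h2,
    fun e t ht => parity_necessary h2 ht, by rw [hcost, hsq]⟩

end Aux

/-- The parity labelling of the even cycle `C n` uses exactly `n²/4` labels; hence there is
a minimal temporally connected proper temporal graph on `n` vertices with at least `n²/4`
labels. -/
theorem stmt11 (n : ℕ) [NeZero n] (hn : 0 < n) (h2 : 2 ∣ n) :
    cost (parityLabel n) = n ^ 2 / 4 ∧
    ∃ L : TLabel n, Proper L ∧ TC L ∧ Minimal L ∧ n ^ 2 / 4 ≤ cost L := by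
  exact stmt11' hn h2

end Temporal
end
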